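/- Let k ≥ 4 and r > 0, and let L = (L_1, L_2, …, L_k) and L' = (L_1', L_2, …, L_k) be tuples of positive reals that agree in all coordinates except possibly the first. If L_1 < r and L_1' < r, then e((G_k)_{r,L}) − v((G_k)_{r,L}) + c((G_k)_{r,L}) = e((G_k)_{r,L'}) − v((G_k)_{r,L'}) + c((G_k)_{r,L'}). -/

import Mathlib

/-- A pair `(x,y)` is a vertex of the model graph `(G_k)_{r,L}`. -/
def IsModelVertex (k : ℕ) (r : ℝ) (L : ℕ → ℝ) (p : ℕ × ℕ) : Prop :=
  p.1 ≤ k ∧ p.2 ≤ k ∧ p.1 ≠ p.2 ∧ r ≤ L p.1 + L p.2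

/-- The vertex type of the model graph `(G_k)_{r,L}`. -/
def ModelVertex (k : ℕ) (r : ℝ) (L : ℕ → ℝ) : Type :=
  {p : ℕ × ℕ // IsModelVertex k r L p}

/-- The adjacency relation of the model graph `(G_k)_{r,L}`. -/
def ModelAdj (r : ℝ) (L : ℕ → ℝ) (a b : ℕ × ℕ) : Prop :=
  (a.1 = b.1 ∧ ((a.2 = 0 ∧ b.2 ≠ 0) ∨ (a.2 ≠ 0 ∧ b.2 = 0)) ∧ r ≤ L a.1) ∨
  (a.2 = b.2 ∧ ((a.1 = 0 ∧ b.1 ≠ 0) ∨ (a.1 ≠ 0 ∧ b.1 = 0)) ∧ r ≤ L a.2)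

theorem ModelAdj.symm {r : ℝ} {L : ℕ → ℝ} {a b : ℕ × ℕ} (h : ModelAdj r L a b) :
    ModelAdj r L b a := by
  rcases h with ⟨h1, h2, h3⟩ | ⟨h1, h2, h3⟩
  · exact Or.inl ⟨h1.symm, by tauto, h1 ▸ h3⟩
  · exact Or.inr ⟨h1.symm, by tauto, h1 ▸ h3⟩

theorem ModelAdj.irrefl {r : ℝ} {L : ℕ → ℝ} {a : ℕ × ℕ} (h : ModelAdj r L a a) : False := by
  rcases h with ⟨_, h2, _⟩ | ⟨_, h2, _⟩ <;> tauto

/-- The model graph `(G_k)_{r,L}`. -/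
def modelGraph (k : ℕ) (r : ℝ) (L : ℕ → ℝ) : SimpleGraph (ModelVertex k r L) where
  Adj a b := ModelAdj r L a.val b.val
  symm := ⟨fun _ _ h => ModelAdj.symm h⟩
  loopless := ⟨fun _ h => ModelAdj.irrefl h⟩

/-!
Only a vertex `(i, y)` or `(x, i)` whose hub coordinate has `L i ≥ r` carries edges. The hub is
never `0` (an edge at hub `0` would use the non-vertex `(0, 0)`) and never `1` (as `L 1 < r`), so it
lies where `L` and `L'` agree. Hence both model graphs, viewed inside the box `[0, k]²`, have the
same edges and differ only by isolated vertices, each of which adds one vertex and one component.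
-/

namespace SimpleGraph

variable {V V' W : Type*} (G : SimpleGraph V) {G' : SimpleGraph V'}

noncomputable def cycleRank : ℤ :=
  Nat.card G.edgeSet - Nat.card V + Nat.card G.ConnectedComponent

theorem Iso.cycleRank_eq (φ : G ≃g G') : G.cycleRank = G'.cycleRank := by
  simp only [cycleRank, Nat.card_congr φ.mapEdgeSet, Nat.card_congr φ.toEquiv,
    Nat.card_congr φ.connectedComponentEquiv]

variable {G} {s : Set V}

theorem Reachable.eq_of_notMem_support {u v : V} (hu : u ∉ G.support) (h : G.Reachable u v) :
    u = v := by
  obtain ⟨_ | ⟨hadj, _⟩⟩ := h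
  · rfl
  · exact absurd ⟨_, hadj⟩ hu

theorem Reachable.induce_of_support_subset (hs : G.support ⊆ s) {u v : V} (hu : u ∈ s)
    (hv : v ∈ s) (h : G.Reachable u v) : (G.induce s).Reachable ⟨u, hu⟩ ⟨v, hv⟩ := by
  obtain ⟨w⟩ := h
  induction w with
  | nil => rfl
  | @cons a b c hab w ih =>
    have hb : b ∈ s := hs ⟨a, hab.symm⟩
    exact (show (G.induce s).Adj ⟨a, hu⟩ ⟨b, hb⟩ from hab).reachable.trans (ih hb hv)

theorem card_edgeSet_induce_of_support_subset [Finite V] (hs : G.support ⊆ s) :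
    Nat.card (G.induce s).edgeSet = Nat.card G.edgeSet := by
  classical
  have := Fintype.ofFinite V
  simp only [Nat.card_eq_fintype_card, ← edgeFinset_card]
  exact card_edgeFinset_induce_of_support_subset hs

theorem card_connectedComponent_of_support_subset [Finite V] (hs : G.support ⊆ s) :
    Nat.card G.ConnectedComponent = Nat.card (G.induce s).ConnectedComponent + Nat.card ↥sᶜ := by
  have hisolated {u v : V} (hu : u ∉ s) (h : G.Reachable u v) : u = v :=
    h.eq_of_notMem_support (hu <| hs ·)
  rw [← Nat.card_sum]
  refine (Nat.card_congr (Equiv.ofBijective (Sum.elim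
    (ConnectedComponent.map (Embedding.induce s).toHom)
    fun v : ↥sᶜ ↦ G.connectedComponentMk v) ⟨?_, ?_⟩)).symm
  · rintro (c | ⟨u, hu⟩) (d | ⟨v, hv⟩) h
    all_goals
      try induction c using ConnectedComponent.ind
      try induction d using ConnectedComponent.ind
      have h := ConnectedComponent.exact h
    · exact congrArg Sum.inl (ConnectedComponent.sound (h.induce_of_support_subset hs _ _))
    · exact absurd (hisolated hv h.symm ▸ Subtype.prop _) hv
    · exact absurd (hisolated hu h ▸ Subtype.prop _) hu
    · exact congrArg Sum.inr (Subtype.ext (hisolated hu h))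
  · intro c
    induction c using ConnectedComponent.ind with | h v => ?_
    by_cases hv : v ∈ s
    · exact ⟨.inl ((G.induce s).connectedComponentMk ⟨v, hv⟩), rfl⟩
    · exact ⟨.inr ⟨v, hv⟩, rfl⟩

theorem cycleRank_induce_of_support_subset [Finite V] (hs : G.support ⊆ s) :
    (G.induce s).cycleRank = G.cycleRank := by
  classical
  have hV : Nat.card V = Nat.card s + Nat.card ↥sᶜ :=
    (Nat.card_congr (Equiv.Set.sumCompl s)).symm.trans Nat.card_sum
  simp only [cycleRank, card_edgeSet_induce_of_support_subset hs,
    card_connectedComponent_of_support_subset hs, hV]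
  push_cast
  ring

theorem cycleRank_map [Finite W] (f : V ↪ W) (G : SimpleGraph V) :
    (G.map f).cycleRank = G.cycleRank := by
  have : Finite V := Finite.of_injective f f.injective
  have hs : (G.map f).support ⊆ Set.range f := by
    rw [support_map]
    exact Set.image_subset_range f _
  rw [← cycleRank_induce_of_support_subset hs]
  exact (Embedding.map f G).isoInduceRange.cycleRank_eq.symm

end SimpleGraph

section Model

open SimpleGraph

variable {k : ℕ} {r : ℝ} {L L' : ℕ → ℝ}

theorem nonneg_of_pos_of_zero (hL0 : L 0 = 0) (hLpos : ∀ i, 1 ≤ i → i ≤ k → 0 < L i) :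
    ∀ i ≤ k, 0 ≤ L i := by
  intro i hi
  rcases i.eq_zero_or_pos with rfl | hi0
  · exact hL0.ge
  · exact (hLpos i hi0 hi).le

theorem ModelAdj.transfer (hL'nonneg : ∀ i ≤ k, 0 ≤ L' i)
    (hagree : ∀ i, 2 ≤ i → i ≤ k → L' i = L i) (h1 : L 1 < r) {a b : ℕ × ℕ}
    (ha : IsModelVertex k r L a) (hb : IsModelVertex k r L b) (hab : ModelAdj r L a b) :
    IsModelVertex k r L' a ∧ IsModelVertex k r L' b ∧ ModelAdj r L' a b := by
  obtain ⟨ha1, ha2, ha12, -⟩ := ha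
  obtain ⟨hb1, hb2, hb12, -⟩ := hb
  have hub {i : ℕ} (hi0 : i ≠ 0) (hik : i ≤ k) (hri : r ≤ L i) : r ≤ L' i := by
    obtain _ | _ | i := i
    · contradiction
    · linarith
    · rwa [hagree _ (by omega) hik]
  rcases hab with ⟨hx, hy, hri⟩ | ⟨hy, hx, hri⟩
  · have hr' := hub (by omega) ha1 hri
    refine ⟨⟨ha1, ha2, ha12, ?_⟩, ⟨hb1, hb2, hb12, ?_⟩, .inl ⟨hx, hy, hr'⟩⟩
    · linarith [hL'nonneg _ ha2]
    · linarith [hL'nonneg _ hb2, hx ▸ hr']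
  · have hr' := hub (by omega) ha2 hri
    refine ⟨⟨ha1, ha2, ha12, ?_⟩, ⟨hb1, hb2, hb12, ?_⟩, .inr ⟨hy, hx, hr'⟩⟩
    · linarith [hL'nonneg _ ha1]
    · linarith [hL'nonneg _ hb1, hy ▸ hr']

def ModelVertex.embedding (k : ℕ) (r : ℝ) (L : ℕ → ℝ) :
    ModelVertex k r L ↪ ↥(Set.Iic k ×ˢ Set.Iic k) :=
  Subtype.impEmbedding _ _ fun _ hp ↦ ⟨hp.1, hp.2.1⟩

theorem modelGraph_map_le (hL'nonneg : ∀ i ≤ k, 0 ≤ L' i)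
    (hagree : ∀ i, 2 ≤ i → i ≤ k → L' i = L i) (h1 : L 1 < r) :
    (modelGraph k r L).map (ModelVertex.embedding k r L) ≤
      (modelGraph k r L').map (ModelVertex.embedding k r L') := by
  intro u v
  simp only [map_adj]
  rintro ⟨a, b, hab, rfl, rfl⟩
  obtain ⟨ha', hb', hab'⟩ := ModelAdj.transfer hL'nonneg hagree h1 a.2 b.2 hab
  exact ⟨⟨a.1, ha'⟩, ⟨b.1, hb'⟩, hab', rfl, rfl⟩

end Model

theorem model_euler_invariant_L1_general (k : ℕ) (r : ℝ)
    (L L' : ℕ → ℝ) (hL0 : L 0 = 0) (hL'0 : L' 0 = 0)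
    (hLpos : ∀ i, 1 ≤ i → i ≤ k → 0 < L i) (hL'pos : ∀ i, 1 ≤ i → i ≤ k → 0 < L' i)
    (hagree : ∀ i, 2 ≤ i → i ≤ k → L' i = L i)
    (h1 : L 1 < r) (h1' : L' 1 < r) :
    (Nat.card (modelGraph k r L).edgeSet : ℤ) - (Nat.card (ModelVertex k r L) : ℤ)
      + (Nat.card (modelGraph k r L).ConnectedComponent : ℤ)
    = (Nat.card (modelGraph k r L').edgeSet : ℤ) - (Nat.card (ModelVertex k r L') : ℤ)
      + (Nat.card (modelGraph k r L').ConnectedComponent : ℤ) := by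
  have hmap : (modelGraph k r L).map (ModelVertex.embedding k r L) =
      (modelGraph k r L').map (ModelVertex.embedding k r L') :=
    le_antisymm (modelGraph_map_le (nonneg_of_pos_of_zero hL'0 hL'pos) hagree h1)
      (modelGraph_map_le (nonneg_of_pos_of_zero hL0 hLpos)
        (fun i hi hik ↦ (hagree i hi hik).symm) h1')
  change (modelGraph k r L).cycleRank = (modelGraph k r L').cycleRank
  rw [← SimpleGraph.cycleRank_map (ModelVertex.embedding k r L), hmap, SimpleGraph.cycleRank_map]

/-- if `4 ≤ k`, `L` and `L'` agree in coordinates `2,…,k`, and both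
`L 1 < r` and `L' 1 < r`, then `e − v + c` is the same for `(G_k)_{r,L}` and
`(G_k)_{r,L'}`. -/
theorem model_euler_invariant_L1 (k : ℕ) (hk : 4 ≤ k) (r : ℝ) (hr : 0 < r)
    (L L' : ℕ → ℝ) (hL0 : L 0 = 0) (hL'0 : L' 0 = 0)
    (hLpos : ∀ i, 1 ≤ i → i ≤ k → 0 < L i) (hL'pos : ∀ i, 1 ≤ i → i ≤ k → 0 < L' i)
    (hagree : ∀ i, 2 ≤ i → i ≤ k → L' i = L i)
    (h1 : L 1 < r) (h1' : L' 1 < r) :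
    (Nat.card (modelGraph k r L).edgeSet : ℤ) - (Nat.card (ModelVertex k r L) : ℤ)
      + (Nat.card (modelGraph k r L).ConnectedComponent : ℤ)
    = (Nat.card (modelGraph k r L').edgeSet : ℤ) - (Nat.card (ModelVertex k r L') : ℤ)
      + (Nat.card (modelGraph k r L').ConnectedComponent : ℤ) :=
  model_euler_invariant_L1_general k r L L' hL0 hL'0 hLpos hL'pos hagree h1 h1'
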